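/- If Λ(x) and Λ(u) are positive definite and ‖g(u) − g(x)‖*_x < 1, then ‖u − x‖_x ≤ ‖g(u) − g(x)‖*_x / (1 − ‖g(u) − g(x)‖*_x). -/

import Mathlib

open Matrix

/-- The gradient of the barrier `f(x) = -log det Λ(x)`:
`g(x)_i = -tr(Λ(x)⁻¹ · Λ(e_i))` (with the total matrix inverse, `0` for singular matrices). -/
noncomputable def grad {U L : ℕ} (Lam : (Fin U → ℝ) →ₗ[ℝ] Matrix (Fin L) (Fin L) ℝ)
    (x : Fin U → ℝ) : Fin U → ℝ :=
  fun i => -((Lam x)⁻¹ * Lam (Pi.single i 1)).trace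

/-- The Hessian of the barrier: `H(x)_{ij} = tr(Λ(x)⁻¹ Λ(e_i) Λ(x)⁻¹ Λ(e_j))`. -/
noncomputable def hess {U L : ℕ} (Lam : (Fin U → ℝ) →ₗ[ℝ] Matrix (Fin L) (Fin L) ℝ)
    (x : Fin U → ℝ) : Matrix (Fin U) (Fin U) ℝ :=
  Matrix.of fun i j =>
    ((Lam x)⁻¹ * Lam (Pi.single i 1) * (Lam x)⁻¹ * Lam (Pi.single j 1)).trace

/-- The local norm `‖v‖_x = (vᵀ H(x) v)^{1/2}`. -/
noncomputable def locNorm {U L : ℕ} (Lam : (Fin U → ℝ) →ₗ[ℝ] Matrix (Fin L) (Fin L) ℝ)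
    (x v : Fin U → ℝ) : ℝ :=
  Real.sqrt (v ⬝ᵥ (hess Lam x).mulVec v)

/-- The dual local norm `‖t‖*_x = (tᵀ H(x)⁻¹ t)^{1/2}`. -/
noncomputable def dualNorm {U L : ℕ} (Lam : (Fin U → ℝ) →ₗ[ℝ] Matrix (Fin L) (Fin L) ℝ)
    (x t : Fin U → ℝ) : ℝ :=
  Real.sqrt (t ⬝ᵥ (hess Lam x)⁻¹.mulVec t)

/-!
Write `A = Λ(x)` and `C = Λ(u - x)`, so that `Λ(u) = A + C`. Then `‖u - x‖_x² = tr(A⁻¹CA⁻¹C)` and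
`⟪g(u) - g(x), u - x⟫ = tr(A⁻¹C) - tr((A + C)⁻¹C)`. A congruence `Sᴴ A S = 1` turns `C` into a
symmetric `M` whose eigenvalues satisfy `μᵢ > -1`, and the pairing into `∑ μᵢ² / (1 + μᵢ)`. Since
every `μᵢ` is at most `λ = (∑ μᵢ²)^{1/2} = ‖u - x‖_x`, the pairing is at least `λ² / (1 + λ)`,
while Cauchy–Schwarz bounds it by `d λ` with `d = ‖g(u) - g(x)‖*_x`. Hence `λ ≤ d (1 + λ)`.
-/

theorem Finset.sum_sq_div_one_add_sqrt_le {ι : Type*} (s : Finset ι) {μ : ι → ℝ}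
    (hμ : ∀ i ∈ s, 0 < 1 + μ i) :
    (∑ i ∈ s, μ i * μ i) / (1 + √(∑ i ∈ s, μ i * μ i)) ≤ ∑ i ∈ s, (μ i - (1 + μ i)⁻¹ * μ i) := by
  rw [Finset.sum_div]
  refine Finset.sum_le_sum fun i hi => ?_
  have hle : μ i ≤ √(∑ j ∈ s, μ j * μ j) :=
    Real.le_sqrt_of_sq_le <| (sq (μ i)).symm ▸
      Finset.single_le_sum (fun j _ => mul_self_nonneg (μ j)) hi
  rw [show μ i - (1 + μ i)⁻¹ * μ i = μ i * μ i / (1 + μ i) by field_simp [(hμ i hi).ne']; ring]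
  gcongr
  · exact mul_self_nonneg _
  · exact hμ i hi

theorem sqrt_le_div_one_sub_of_div_one_add_sqrt_le {q d : ℝ} (hq : 0 ≤ q) (hd : 0 ≤ d)
    (hd1 : d < 1) (h : q / (1 + √q) ≤ d * √q) : √q ≤ d / (1 - d) := by
  obtain ⟨r, hr, rfl⟩ : ∃ r, 0 ≤ r ∧ q = r ^ 2 := ⟨√q, Real.sqrt_nonneg q, (Real.sq_sqrt hq).symm⟩
  rw [Real.sqrt_sq hr, div_le_iff₀ (by linarith)] at h
  rw [Real.sqrt_sq hr, le_div_iff₀ (by linarith)]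
  rcases hr.eq_or_lt with rfl | hpos
  · simpa using hd
  · nlinarith

theorem LinearMap.apply_eq_sum_smul_single {ι R M : Type*} [Fintype ι] [DecidableEq ι]
    [CommSemiring R] [AddCommMonoid M] [Module R M] (f : (ι → R) →ₗ[R] M) (v : ι → R) :
    f v = ∑ i, v i • f (Pi.single i 1) := by
  conv_lhs => rw [← Finset.univ_sum_single v, map_sum]
  refine Finset.sum_congr rfl fun i _ => ?_
  rw [← _root_.map_smul, ← Pi.single_smul', smul_eq_mul, mul_one]

namespace Matrix

variable {n : Type*} [Fintype n] [DecidableEq n]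

theorem inv_conj_mul_conj {α : Type*} [CommRing α] {P : Matrix n n α} (hP : IsUnit P)
    (Q B C : Matrix n n α) :
    (P * B * Q)⁻¹ * (P * C * Q) = Q⁻¹ * (B⁻¹ * C) * Q := by
  rw [mul_inv_rev, mul_inv_rev]
  calc Q⁻¹ * (B⁻¹ * P⁻¹) * (P * C * Q) = Q⁻¹ * B⁻¹ * (P⁻¹ * P) * C * Q := by
        simp only [Matrix.mul_assoc]
    _ = Q⁻¹ * (B⁻¹ * C) * Q := by
      rw [nonsing_inv_mul _ ((isUnit_iff_isUnit_det P).mp hP), Matrix.mul_one,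
        Matrix.mul_assoc Q⁻¹]

open scoped ComplexOrder MatrixOrder in
theorem PosDef.exists_isUnit_conjTranspose_mul_mul_eq_one {𝕜 : Type*} [RCLike 𝕜]
    {A : Matrix n n 𝕜} (hA : A.PosDef) : ∃ S : Matrix n n 𝕜, IsUnit S ∧ Sᴴ * A * S = 1 := by
  obtain ⟨Y, rfl⟩ := CStarAlgebra.nonneg_iff_eq_star_mul_self.mp hA.posSemidef.nonneg
  have hY : IsUnit Y.det := by
    have := hA.det_pos.ne'
    rw [star_eq_conjTranspose, det_mul, det_conjTranspose] at this
    exact isUnit_iff_ne_zero.mpr (right_ne_zero_of_mul this)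
  refine ⟨Y⁻¹, (isUnit_iff_isUnit_det _).mpr (isUnit_nonsing_inv_det Y hY), ?_⟩
  rw [conjTranspose_nonsing_inv, star_eq_conjTranspose, Matrix.mul_assoc, Matrix.mul_assoc,
    mul_nonsing_inv _ hY, Matrix.mul_one, nonsing_inv_mul _ (by simpa using hY.star)]

theorem trace_conjStarAlgAut {𝕜 : Type*} [RCLike 𝕜] (U : unitary (Matrix n n 𝕜))
    (X : Matrix n n 𝕜) : (Unitary.conjStarAlgAut 𝕜 _ U X).trace = X.trace := by
  rw [Unitary.conjStarAlgAut_apply, trace_mul_cycle, Unitary.coe_star_mul_self, Matrix.one_mul]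

theorem conjStarAlgAut_inv {𝕜 : Type*} [RCLike 𝕜] (U : unitary (Matrix n n 𝕜))
    (X : Matrix n n 𝕜) :
    Unitary.conjStarAlgAut 𝕜 _ U X⁻¹ = (Unitary.conjStarAlgAut 𝕜 _ U X)⁻¹ := by
  rw [Unitary.conjStarAlgAut_apply, Unitary.conjStarAlgAut_apply, mul_inv_rev, mul_inv_rev,
    ← Unitary.coe_star, inv_eq_left_inv (Unitary.coe_star_mul_self U),
    inv_eq_left_inv (Unitary.coe_mul_star_self U), Matrix.mul_assoc, Unitary.coe_star]

theorem IsHermitian.trace_mul_self_div_le {M : Matrix n n ℝ} (hM : M.IsHermitian)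
    (hpd : (1 + M).PosDef) :
    (M * M).trace / (1 + √(M * M).trace) ≤ M.trace - ((1 + M)⁻¹ * M).trace := by
  set φ := Unitary.conjStarAlgAut ℝ (Matrix n n ℝ) hM.eigenvectorUnitary
  set μ := hM.eigenvalues
  have hspec : M = φ (diagonal μ) := by
    have := hM.spectral_theorem
    simp only [RCLike.ofReal_real_eq_id, Function.id_comp] at this
    exact this
  rw [hspec, ← map_one φ, ← map_add] at hpd ⊢
  rw [← map_mul, ← conjStarAlgAut_inv, ← map_mul, trace_conjStarAlgAut, trace_conjStarAlgAut,
    trace_conjStarAlgAut]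
  have hD : 1 + diagonal μ = diagonal (1 + μ) := by rw [← diagonal_one, diagonal_add]; rfl
  rw [hD] at hpd ⊢
  have hμ : ∀ i, 0 < 1 + μ i := by
    rwa [Unitary.conjStarAlgAut_apply, Unitary.isUnit_coe.posDef_star_right_conjugate_iff,
      posDef_diagonal_iff] at hpd
  have hinv : (diagonal (1 + μ))⁻¹ = diagonal fun i => (1 + μ i)⁻¹ := by
    refine inv_eq_left_inv ?_
    rw [diagonal_mul_diagonal, ← diagonal_one]
    exact congrArg diagonal (funext fun i => inv_mul_cancel₀ (hμ i).ne')
  rw [hinv]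
  simp only [diagonal_mul_diagonal, trace_diagonal, ← Finset.sum_sub_distrib]
  exact Finset.univ.sum_sq_div_one_add_sqrt_le fun i _ => hμ i

section Congruence

variable {α : Type*} [CommRing α] [StarRing α] {A S : Matrix n n α} (hS : IsUnit S)
  (hSAS : Sᴴ * A * S = 1)
include hS hSAS

theorem conjTranspose_mul_mul_eq_of_conjTranspose_mul_mul_eq_one (X : Matrix n n α) :
    Sᴴ * X * S = S⁻¹ * (A⁻¹ * X) * S := by
  rw [← inv_conj_mul_conj (P := Sᴴ) ((isUnit_conjTranspose S).mpr hS), hSAS, inv_one,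
    Matrix.one_mul]

theorem trace_conjTranspose_mul_mul_mul_self_of_conjTranspose_mul_mul_eq_one (C : Matrix n n α) :
    (Sᴴ * C * S * (Sᴴ * C * S)).trace = (A⁻¹ * C * A⁻¹ * C).trace := by
  have hcancel :
      S⁻¹ * (A⁻¹ * C) * S * (S⁻¹ * (A⁻¹ * C) * S) = S⁻¹ * (A⁻¹ * C * A⁻¹ * C) * S := by
    simp only [Matrix.mul_assoc, mul_nonsing_inv_cancel_left _ _ ((isUnit_iff_isUnit_det S).mp hS)]
  rw [conjTranspose_mul_mul_eq_of_conjTranspose_mul_mul_eq_one hS hSAS, hcancel, trace_conj' hS]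

end Congruence

variable {A C : Matrix n n ℝ}

theorem PosDef.trace_inv_mul_mul_inv_mul_pos (hA : A.PosDef) (hC : C.IsHermitian) (hC0 : C ≠ 0) :
    0 < (A⁻¹ * C * A⁻¹ * C).trace := by
  obtain ⟨S, hS, hSAS⟩ := hA.exists_isUnit_conjTranspose_mul_mul_eq_one
  have hM : (Sᴴ * C * S)ᴴ = Sᴴ * C * S := (isHermitian_conjTranspose_mul_mul S hC).eq
  have hM0 : Sᴴ * C * S ≠ 0 := by
    rwa [Ne, hS.mul_left_eq_zero, ((isUnit_conjTranspose S).mpr hS).mul_right_eq_zero]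
  rw [← trace_conjTranspose_mul_mul_mul_self_of_conjTranspose_mul_mul_eq_one hS hSAS]
  nth_rw 1 [← hM]
  exact lt_of_le_of_ne (posSemidef_conjTranspose_mul_self _).trace_nonneg
    (Ne.symm (trace_conjTranspose_mul_self_eq_zero_iff.not.mpr hM0))

theorem PosDef.trace_inv_mul_mul_inv_mul_div_le (hA : A.PosDef) (hC : C.IsHermitian)
    (hAC : (A + C).PosDef) :
    (A⁻¹ * C * A⁻¹ * C).trace / (1 + √(A⁻¹ * C * A⁻¹ * C).trace)
      ≤ (A⁻¹ * C).trace - ((A + C)⁻¹ * C).trace := by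
  obtain ⟨S, hS, hSAS⟩ := hA.exists_isUnit_conjTranspose_mul_mul_eq_one
  have h1M : 1 + Sᴴ * C * S = Sᴴ * (A + C) * S := by
    rw [← hSAS, Matrix.mul_add, Matrix.add_mul]
  have key := (isHermitian_conjTranspose_mul_mul S hC).trace_mul_self_div_le
    (h1M ▸ hAC.conjTranspose_mul_mul_same (mulVec_injective_iff_isUnit.mpr hS))
  rwa [trace_conjTranspose_mul_mul_mul_self_of_conjTranspose_mul_mul_eq_one hS hSAS, h1M,
    inv_conj_mul_conj ((isUnit_conjTranspose S).mpr hS), trace_conj' hS,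
    conjTranspose_mul_mul_eq_of_conjTranspose_mul_mul_eq_one hS hSAS, trace_conj' hS] at key

omit [DecidableEq n] in
theorem IsHermitian.dotProduct_mulVec_comm {H : Matrix n n ℝ} (hH : H.IsHermitian) (a v : n → ℝ) :
    v ⬝ᵥ H *ᵥ a = a ⬝ᵥ H *ᵥ v := by
  rw [dotProduct_mulVec, ← mulVec_transpose, ← conjTranspose_eq_transpose_of_trivial, hH.eq,
    dotProduct_comm]

omit [DecidableEq n] in
theorem PosSemidef.dotProduct_mulVec_le_sqrt_mul_sqrt {H : Matrix n n ℝ} (hH : H.PosSemidef)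
    (a v : n → ℝ) : a ⬝ᵥ H *ᵥ v ≤ √(a ⬝ᵥ H *ᵥ a) * √(v ⬝ᵥ H *ᵥ v) := by
  have hquad (s : ℝ) : 0 ≤ (v ⬝ᵥ H *ᵥ v) * (s * s) + 2 * (a ⬝ᵥ H *ᵥ v) * s + a ⬝ᵥ H *ᵥ a := by
    have := hH.dotProduct_mulVec_nonneg (a + s • v)
    simp only [star_trivial, mulVec_add, mulVec_smul, add_dotProduct, dotProduct_add,
      smul_dotProduct, dotProduct_smul, smul_eq_mul, hH.isHermitian.dotProduct_mulVec_comm a v]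
      at this
    linarith
  have hdisc := discrim_le_zero hquad
  rw [discrim] at hdisc
  rw [← Real.sqrt_mul (by simpa using hH.dotProduct_mulVec_nonneg a)]
  exact Real.le_sqrt_of_sq_le (by nlinarith)

theorem PosDef.dotProduct_le_sqrt_mul_sqrt {H : Matrix n n ℝ} (hH : H.PosDef) (t v : n → ℝ) :
    t ⬝ᵥ v ≤ √(t ⬝ᵥ H⁻¹ *ᵥ t) * √(v ⬝ᵥ H *ᵥ v) := by
  have ht : H *ᵥ (H⁻¹ *ᵥ t) = t := by
    rw [mulVec_mulVec, mul_nonsing_inv _ hH.det_pos.ne'.isUnit, one_mulVec]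
  calc t ⬝ᵥ v = H⁻¹ *ᵥ t ⬝ᵥ H *ᵥ v := by
        rw [hH.isHermitian.dotProduct_mulVec_comm, ht, dotProduct_comm]
    _ ≤ √(H⁻¹ *ᵥ t ⬝ᵥ H *ᵥ (H⁻¹ *ᵥ t)) * √(v ⬝ᵥ H *ᵥ v) :=
        hH.posSemidef.dotProduct_mulVec_le_sqrt_mul_sqrt _ v
    _ = √(t ⬝ᵥ H⁻¹ *ᵥ t) * √(v ⬝ᵥ H *ᵥ v) := by rw [ht, dotProduct_comm]

end Matrix

section Barrier

variable {U L : ℕ} (Lam : (Fin U → ℝ) →ₗ[ℝ] Matrix (Fin L) (Fin L) ℝ)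

theorem dotProduct_hess_mulVec (x v w : Fin U → ℝ) :
    v ⬝ᵥ hess Lam x *ᵥ w = ((Lam x)⁻¹ * Lam v * (Lam x)⁻¹ * Lam w).trace := by
  rw [Lam.apply_eq_sum_smul_single v, Lam.apply_eq_sum_smul_single w]
  simp only [Finset.mul_sum, Finset.sum_mul, Matrix.mul_smul, Matrix.smul_mul, trace_sum,
    trace_smul, smul_eq_mul, dotProduct, mulVec, hess, Matrix.of_apply]
  rw [Finset.sum_comm]
  exact Finset.sum_congr rfl fun i _ => Finset.sum_congr rfl fun j _ => by ring

theorem grad_sub_grad_dotProduct (u x v : Fin U → ℝ) :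
    (grad Lam u - grad Lam x) ⬝ᵥ v = ((Lam x)⁻¹ * Lam v).trace - ((Lam u)⁻¹ * Lam v).trace := by
  rw [Lam.apply_eq_sum_smul_single v]
  simp only [Finset.mul_sum, Matrix.mul_smul, trace_sum, trace_smul, smul_eq_mul, dotProduct,
    grad, Pi.sub_apply, ← Finset.sum_sub_distrib]
  exact Finset.sum_congr rfl fun i _ => by ring

theorem hess_posDef (hinj : Function.Injective Lam) (hsym : ∀ v, (Lam v).IsSymm)
    {x : Fin U → ℝ} (hx : (Lam x).PosDef) : (hess Lam x).PosDef := by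
  refine .of_dotProduct_mulVec_pos (IsHermitian.ext fun i j => ?_) fun v hv => ?_
  · simp only [hess, of_apply, star_trivial]
    rw [Matrix.mul_assoc _ (Lam x)⁻¹, trace_mul_comm, ← Matrix.mul_assoc]
  · rw [star_trivial, dotProduct_hess_mulVec]
    exact hx.trace_inv_mul_mul_inv_mul_pos (isHermitian_iff_isSymm.mpr (hsym v))
      (fun h => hv (hinj (h.trans (map_zero Lam).symm)))

end Barrier

theorem stmt6_general {U L : ℕ}
    (Lam : (Fin U → ℝ) →ₗ[ℝ] Matrix (Fin L) (Fin L) ℝ)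
    (hinj : Function.Injective Lam) (hsym : ∀ v, (Lam v).IsSymm)
    (x u : Fin U → ℝ) (hx : (Lam x).PosDef) (hu : (Lam u).PosDef)
    (h : dualNorm Lam x (grad Lam u - grad Lam x) < 1) :
    locNorm Lam x (u - x)
      ≤ dualNorm Lam x (grad Lam u - grad Lam x)
        / (1 - dualNorm Lam x (grad Lam u - grad Lam x)) := by
  have hH := hess_posDef Lam hinj hsym hx
  have hxu : Lam x + Lam (u - x) = Lam u := by rw [map_sub, add_sub_cancel]
  have hlower := hx.trace_inv_mul_mul_inv_mul_div_le (isHermitian_iff_isSymm.mpr (hsym _))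
    (hxu ▸ hu)
  rw [hxu, ← dotProduct_hess_mulVec, ← grad_sub_grad_dotProduct] at hlower
  have hupper := hH.dotProduct_le_sqrt_mul_sqrt (grad Lam u - grad Lam x) (u - x)
  exact sqrt_le_div_one_sub_of_div_one_add_sqrt_le
    (by simpa using hH.posSemidef.dotProduct_mulVec_nonneg (u - x)) (Real.sqrt_nonneg _) h
    (hlower.trans hupper)

/-- `‖u − x‖_x ≤ ‖g(u) − g(x)‖*_x / (1 − ‖g(u) − g(x)‖*_x)`. -/
theorem stmt6 {U L : ℕ} (hU : 0 < U) (hL : 0 < L)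
    (Lam : (Fin U → ℝ) →ₗ[ℝ] Matrix (Fin L) (Fin L) ℝ)
    (hinj : Function.Injective Lam) (hsym : ∀ v, (Lam v).IsSymm)
    (x u : Fin U → ℝ) (hx : (Lam x).PosDef) (hu : (Lam u).PosDef)
    (h : dualNorm Lam x (grad Lam u - grad Lam x) < 1) :
    locNorm Lam x (u - x)
      ≤ dualNorm Lam x (grad Lam u - grad Lam x)
        / (1 - dualNorm Lam x (grad Lam u - grad Lam x)) :=
  stmt6_general Lam hinj hsym x u hx hu h
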